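/- Every normalized fully ternary string s of length n whose last symbol is 2, other than the string 0212, has flip sorting distance d_s(s) ≤ n − 2. -/

import Mathlib

/-!
The final `2` is a maximum and may stay in place, so it suffices to sort every normalized string
`t` over `{0, 1, 2}` other than `021` with `|t| - 1` flips. This goes by induction on `|t|`.
A trailing `2` is dropped again. If the first symbol `x` recurs, `t = x X x Y`, one flip makes the
two `x` adjacent, and since a doubled symbol can be carried along by every flip sequence we may
recurse on `X.reverse ++ x :: Y`. A leading unique `2` is moved to the end by a full flip.
Otherwise `t = x w` with `w` alternating between `2` and the remaining symbol `c`; after at most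
one flip such strings are sorted by a ladder of flip pairs `cᵃ x 2ᵇ (2c)ᵏ⁺¹ ↦ cᵃ⁺¹ x 2ᵇ⁺¹ (2c)ᵏ`,
plus a short tail when `x = 0`. Strings of length at most `4` are checked by exhaustive search.
-/

/-- Prefix reversal (flip) of the first `i` symbols of `s`. -/
def pflip (i : ℕ) (s : List ℕ) : List ℕ := (s.take i).reverse ++ s.drop i

/-- One flip step: `t` is obtained from `s` by some flip `f^(i)` with `1 ≤ i ≤ |s|`. -/
def FlipStep (s t : List ℕ) : Prop := ∃ i, 1 ≤ i ∧ i ≤ s.length ∧ t = pflip i s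

/-- `ReachIn m s t`: `t` can be obtained from `s` by exactly `m` flips. -/
def ReachIn : ℕ → List ℕ → List ℕ → Prop
  | 0 => fun s t => s = t
  | (m+1) => fun s t => ∃ u, FlipStep s u ∧ ReachIn m u t

/-- Flip distance: minimum number of flips transforming `s` into `t`. -/
noncomputable def flipDist (s t : List ℕ) : ℕ := sInf {m | ReachIn m s t}

/-- Two strings are compatible if every symbol occurs equally often in both. -/
def Compatible (s t : List ℕ) : Prop := ∀ a, s.count a = t.count a

/-- A string is fully `k`-ary if the set of symbols occurring in it is exactly `{0,…,k-1}`. -/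
def FullyKary (k : ℕ) (s : List ℕ) : Prop := ∀ a, a ∈ s ↔ a < k

/-- A string is normalized if no two adjacent symbols are equal. -/
def Normalized (s : List ℕ) : Prop := s.Chain' (· ≠ ·)

/-- A string is grouped if the occurrences of each symbol are consecutive. -/
def Grouped (s : List ℕ) : Prop :=
  ∀ i j l : Fin s.length, i < j → j < l → s.get i = s.get l → s.get j = s.get i

/-- Flip grouping distance: minimum number of flips transforming `s` into some grouped string. -/
noncomputable def groupDist (s : List ℕ) : ℕ := sInf {m | ∃ t, Grouped t ∧ ReachIn m s t}

/-- Flip sorting distance: flip distance from `s` to its non-descending rearrangement `I(s)`. -/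
noncomputable def sortDist (s : List ℕ) : ℕ := flipDist s (s.insertionSort (· ≤ ·))

/-- `rep w m` is the concatenation of `m` copies of the string `w`. -/
def rep (w : List ℕ) (m : ℕ) : List ℕ := (List.replicate m w).flatten

open List

lemma pflip_append {X Y : List ℕ} {i : ℕ} (h : X.length = i) :
    pflip i (X ++ Y) = X.reverse ++ Y := by
  rw [pflip, take_left' h, drop_left' h]

lemma pflip_append_of_le {X Y : List ℕ} {i : ℕ} (h : i ≤ X.length) :
    pflip i (X ++ Y) = pflip i X ++ Y := by
  rw [pflip, pflip, take_append_of_le_length h, drop_append_of_le_length h, append_assoc]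

lemma flipStep_append {X : List ℕ} (Y : List ℕ) (hX : X ≠ []) :
    FlipStep (X ++ Y) (X.reverse ++ Y) :=
  ⟨X.length, length_pos_iff.mpr hX, by simp, (pflip_append rfl).symm⟩

lemma FlipStep.perm {s t : List ℕ} (h : FlipStep s t) : s ~ t := by
  obtain ⟨i, -, -, rfl⟩ := h
  calc s = s.take i ++ s.drop i := (take_append_drop i s).symm
    _ ~ pflip i s := (reverse_perm _).symm.append_right _

lemma ReachIn.perm : ∀ {m : ℕ} {s t : List ℕ}, ReachIn m s t → s ~ t
  | 0, _, _, h => h ▸ Perm.refl _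
  | _ + 1, _, _, ⟨_, hs, h⟩ => FlipStep.perm hs |>.trans (ReachIn.perm h)

lemma ReachIn.trans : ∀ {a b : ℕ} {s u t : List ℕ},
    ReachIn a s u → ReachIn b u t → ReachIn (a + b) s t
  | 0, _, _, _, _, h, h' => by rwa [Nat.zero_add, show _ = _ from h]
  | a + 1, b, _, _, _, ⟨v, hs, h⟩, h' => by
    rw [Nat.add_right_comm]
    exact ⟨v, hs, h.trans h'⟩

lemma ReachIn.cons {m : ℕ} {s u t : List ℕ} (hs : FlipStep s u) (h : ReachIn m u t) :
    ReachIn (m + 1) s t :=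
  ⟨u, hs, h⟩

lemma FlipStep.reachIn {s t : List ℕ} (h : FlipStep s t) : ReachIn 1 s t :=
  ⟨t, h, rfl⟩

lemma ReachIn.append_right : ∀ {m : ℕ} {s t : List ℕ} (v : List ℕ),
    ReachIn m s t → ReachIn m (s ++ v) (t ++ v)
  | 0, _, _, _, h => by rw [show _ = _ from h]; rfl
  | _ + 1, s, _, v, ⟨u, ⟨i, hi, his, hu⟩, h⟩ =>
    ⟨u ++ v, ⟨i, hi, by simp; omega, by rw [hu, pflip_append_of_le his]⟩, h.append_right v⟩

def FlipSortable (b : ℕ) (s : List ℕ) : Prop :=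
  ∃ m ≤ b, ∃ t, ReachIn m s t ∧ t.Pairwise (· ≤ ·)

lemma FlipSortable.of_pairwise {s : List ℕ} (h : s.Pairwise (· ≤ ·)) (b : ℕ) :
    FlipSortable b s :=
  ⟨0, b.zero_le, s, rfl, h⟩

lemma FlipSortable.mono {b b' : ℕ} {s : List ℕ} (h : FlipSortable b s) (hb : b ≤ b') :
    FlipSortable b' s :=
  let ⟨m, hm, t, ht, hsort⟩ := h
  ⟨m, hm.trans hb, t, ht, hsort⟩

lemma FlipSortable.of_reachIn {m b : ℕ} {s u : List ℕ} (hs : ReachIn m s u)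
    (h : FlipSortable b u) : FlipSortable (m + b) s :=
  let ⟨k, hk, t, ht, hsort⟩ := h
  ⟨m + k, by omega, t, hs.trans ht, hsort⟩

lemma ReachIn.flipSortable {m : ℕ} {s t : List ℕ} (h : ReachIn m s t)
    (ht : t.Pairwise (· ≤ ·)) : FlipSortable m s :=
  ⟨m, le_rfl, t, h, ht⟩

lemma FlipSortable.of_flipStep {b : ℕ} {s u : List ℕ} (hs : FlipStep s u)
    (h : FlipSortable b u) : FlipSortable (b + 1) s := by
  simpa only [Nat.add_comm] using h.of_reachIn (FlipStep.reachIn hs)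

lemma FlipSortable.append_max {b c : ℕ} {s : List ℕ} (h : FlipSortable b s)
    (hc : ∀ a ∈ s, a ≤ c) : FlipSortable b (s ++ [c]) := by
  obtain ⟨m, hm, t, ht, hsort⟩ := h
  refine ⟨m, hm, t ++ [c], ht.append_right [c], pairwise_append.mpr ⟨hsort, by simp, ?_⟩⟩
  simpa using fun a ha => hc a (ht.perm.mem_iff.mpr ha)

lemma sortDist_le {b : ℕ} {s : List ℕ} (h : FlipSortable b s) : sortDist s ≤ b := by
  obtain ⟨m, hm, t, ht, hsort⟩ := h
  have : t = s.insertionSort (· ≤ ·) :=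
    (ht.perm.symm.trans (perm_insertionSort _ s).symm).eq_of_pairwise
      (fun _ _ _ _ => le_antisymm) hsort (pairwise_insertionSort _ s)
  exact (Nat.sInf_le (this ▸ ht : ReachIn m s _)).trans hm

def Doubling (s t : List ℕ) : Prop :=
  ∃ A x B, s = A ++ x :: B ∧ t = A ++ x :: x :: B

/-- A flip of `A ++ x :: B` that moves `x` is mirrored on `A ++ x :: x :: B` by the flip one
symbol longer, so the doubled pair stays adjacent. -/
lemma Doubling.flipStep {s s' u : List ℕ} (hd : Doubling s s') (h : FlipStep s u) :
    ∃ u', FlipStep s' u' ∧ Doubling u u' := by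
  obtain ⟨A, x, B, rfl, rfl⟩ := hd
  obtain ⟨i, hi, his, rfl⟩ := h
  by_cases hiA : i ≤ A.length
  · refine ⟨pflip i A ++ x :: x :: B, ⟨i, hi, by simp; omega, (pflip_append_of_le hiA).symm⟩, ?_⟩
    exact ⟨pflip i A, x, B, pflip_append_of_le hiA, rfl⟩
  · obtain ⟨C, D, rfl, hC⟩ : ∃ C D, B = C ++ D ∧ C.length = i - A.length - 1 :=
      ⟨B.take (i - A.length - 1), B.drop (i - A.length - 1), (take_append_drop _ _).symm,
        by simp at his ⊢; omega⟩
    refine ⟨(A ++ x :: x :: C).reverse ++ D, ⟨i + 1, by omega, by simp at his ⊢; omega, ?_⟩, ?_⟩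
    · rw [show A ++ x :: x :: (C ++ D) = (A ++ x :: x :: C) ++ D by simp,
        pflip_append (by simp; omega)]
    · refine ⟨C.reverse, x, A.reverse ++ D, ?_, by simp⟩
      rw [show A ++ x :: (C ++ D) = (A ++ x :: C) ++ D by simp, pflip_append (by simp; omega)]
      simp

lemma Doubling.reachIn : ∀ {m : ℕ} {s s' t : List ℕ}, Doubling s s' → ReachIn m s t →
    ∃ t', ReachIn m s' t' ∧ Doubling t t'
  | 0, _, s', _, hd, h => ⟨s', rfl, (show _ = _ from h) ▸ hd⟩
  | _ + 1, _, _, _, hd, ⟨_, hs, h⟩ =>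
    let ⟨_, hs', hd'⟩ := hd.flipStep hs
    let ⟨t', h', hdt⟩ := hd'.reachIn h
    ⟨t', ReachIn.cons hs' h', hdt⟩

lemma Doubling.pairwise {s t : List ℕ} (hd : Doubling s t) (h : s.Pairwise (· ≤ ·)) :
    t.Pairwise (· ≤ ·) := by
  obtain ⟨A, x, B, rfl, rfl⟩ := hd
  simp only [pairwise_append, pairwise_cons, mem_cons] at h ⊢
  grind

lemma FlipSortable.of_doubling {b : ℕ} {s t : List ℕ} (h : FlipSortable b s) (hd : Doubling s t) :
    FlipSortable b t := by
  obtain ⟨m, hm, u, hu, hsort⟩ := h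
  obtain ⟨u', hu', hdu⟩ := hd.reachIn hu
  exact ⟨m, hm, u', hu', hdu.pairwise hsort⟩

lemma rep_succ (w : List ℕ) (k : ℕ) : rep w (k + 1) = w ++ rep w k := by
  simp [rep, replicate_succ]

lemma length_rep (w : List ℕ) (k : ℕ) : (rep w k).length = k * w.length := by
  simp [rep]

lemma rep_succ' (w : List ℕ) (k : ℕ) : rep w (k + 1) = rep w k ++ w := by
  simp [rep, replicate_succ']

lemma replicate_append_cons (n a : ℕ) (l : List ℕ) :
    replicate n a ++ a :: l = a :: (replicate n a ++ l) := by
  rw [← singleton_append, ← append_assoc, ← replicate_succ', replicate_succ, cons_append]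

lemma reachIn_absorb (u y v a b : ℕ) (r : List ℕ) :
    ReachIn 2 (replicate a u ++ y :: (replicate b v ++ v :: u :: r))
      (replicate (a + 1) u ++ y :: (replicate (b + 1) v ++ r)) := by
  have h₁ := flipStep_append (u :: r) (X := replicate a u ++ y :: replicate (b + 1) v) (by simp)
  have h₂ := flipStep_append r (X := replicate (b + 1) v ++ y :: replicate (a + 1) u) (by simp)
  simp only [reverse_append, reverse_cons, reverse_replicate, append_assoc, cons_append,
    nil_append, replicate_succ, replicate_append_cons] at h₁ h₂ ⊢
  exact h₁.reachIn.trans h₂.reachIn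

lemma reachIn_ladder (u y v : ℕ) :
    ∀ k a b, ReachIn (2 * k) (replicate a u ++ y :: (replicate b v ++ rep [v, u] k))
      (replicate (a + k) u ++ y :: replicate (b + k) v)
  | 0, a, b => by simp [rep]; rfl
  | k + 1, a, b => by
    rw [rep_succ, cons_append, cons_append, nil_append, show 2 * (k + 1) = 2 + 2 * k by ring,
      show a + (k + 1) = a + 1 + k by ring, show b + (k + 1) = b + 1 + k by ring]
    exact (reachIn_absorb u y v a b _).trans (reachIn_ladder u y v k (a + 1) (b + 1))

/-- Ends the ladder when `y` must come first: the last ladder step stops after its first flip. -/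
lemma reachIn_finish (u y v a b : ℕ) :
    ReachIn 4 (replicate b u ++ y :: (replicate a v ++ [v, u, v, u]))
      (y :: (replicate (b + 2) u ++ replicate (a + 2) v)) := by
  have h₁ := flipStep_append [u, v, u] (X := replicate b u ++ y :: replicate (a + 1) v) (by simp)
  have h₂ := flipStep_append [] (X := replicate (a + 1) v ++ y :: replicate (b + 1) u ++ [v, u])
    (by simp)
  have h₃ := flipStep_append (replicate (b + 1) u ++ y :: replicate (a + 1) v) (X := [u, v])
    (by simp)
  have h₄ := flipStep_append (replicate (a + 1) v) (X := v :: replicate (b + 2) u ++ [y]) (by simp)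
  simp only [reverse_append, reverse_cons, reverse_replicate, reverse_nil, append_assoc,
    cons_append, nil_append, append_nil, replicate_succ, replicate_append_cons] at h₁ h₂ h₃ h₄ ⊢
  exact h₁.reachIn.trans (h₂.reachIn.trans (h₃.reachIn.trans h₄.reachIn))

lemma pairwise_replicate_three {a b c : ℕ} (hab : a ≤ b) (hbc : b ≤ c) (p q r : ℕ) :
    (replicate p a ++ (replicate q b ++ replicate r c)).Pairwise (· ≤ ·) := by
  simp only [pairwise_append, pairwise_replicate, mem_append, mem_replicate]
  grind

lemma flipSortable_zeros_one_rep (a k : ℕ) :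
    FlipSortable (2 * k) (replicate a 0 ++ 1 :: rep [2, 0] k) := by
  have h := reachIn_ladder 0 1 2 k a 0
  rw [replicate_zero, nil_append, zero_add] at h
  exact h.flipSortable (pairwise_replicate_three zero_le_one one_le_two (a + k) 1 k)

lemma flipSortable_ones_zero_rep (a k : ℕ) :
    FlipSortable (2 * k + 4) (replicate a 1 ++ 0 :: rep [2, 1] (k + 2)) := by
  have h := (reachIn_ladder 1 0 2 k a 0).append_right [2, 1, 2, 1]
  simp only [replicate_zero, nil_append, zero_add, append_assoc, cons_append] at h
  rw [rep_succ', rep_succ', append_assoc]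
  exact (h.trans (reachIn_finish 1 0 2 k (a + k))).flipSortable
    (pairwise_replicate_three zero_le_one one_le_two 1 (a + k + 2) (k + 2))

def canFlipSort : ℕ → List ℕ → Bool
  | 0, s => decide (s.Pairwise (· ≤ ·))
  | b + 1, s => decide (s.Pairwise (· ≤ ·)) ||
      (range' 1 s.length).any fun i => canFlipSort b (pflip i s)

lemma flipSortable_of_canFlipSort : ∀ {b : ℕ} {s : List ℕ}, canFlipSort b s = true →
    FlipSortable b s
  | 0, _, h => FlipSortable.of_pairwise (of_decide_eq_true h) 0
  | b + 1, s, h => by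
    rcases Bool.or_eq_true_iff.mp h with h | h
    · exact FlipSortable.of_pairwise (of_decide_eq_true h) _
    · obtain ⟨i, hi, hsort⟩ := any_eq_true.mp h
      rw [mem_range'_1] at hi
      exact FlipSortable.of_flipStep ⟨i, by omega, by omega, rfl⟩
        (flipSortable_of_canFlipSort hsort)

lemma flipSortable_of_length_le_four {t : List ℕ} (hlen : t.length ≤ 4) (h3 : ∀ a ∈ t, a < 3)
    (hne : t ≠ [0, 2, 1]) : FlipSortable (t.length - 1) t := by
  refine flipSortable_of_canFlipSort ?_
  match t, hlen, h3 with
  | [], _, _ => rfl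
  | [_], _, _ => rfl
  | [a, b], _, h3 =>
    have key : ∀ a < 3, ∀ b < 3, canFlipSort 1 [a, b] = true := by decide
    exact key a (h3 a (by simp)) b (h3 b (by simp))
  | [a, b, c], _, h3 =>
    have key : ∀ a < 3, ∀ b < 3, ∀ c < 3, [a, b, c] ≠ [0, 2, 1] →
      canFlipSort 2 [a, b, c] = true := by decide
    exact key a (h3 a (by simp)) b (h3 b (by simp)) c (h3 c (by simp)) hne
  | [a, b, c, d], _, h3 =>
    have key : ∀ a < 3, ∀ b < 3, ∀ c < 3, ∀ d < 3, canFlipSort 3 [a, b, c, d] = true := by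
      decide
    exact key a (h3 a (by simp)) b (h3 b (by simp)) c (h3 c (by simp)) d (h3 d (by simp))

lemma Normalized.reverse {l : List ℕ} (h : Normalized l) : Normalized l.reverse :=
  isChain_reverse.mpr (h.imp fun _ _ hab => hab.symm)

lemma Normalized.reverse_append_cons {x : ℕ} {X Y : List ℕ} (h : Normalized (x :: (X ++ x :: Y))) :
    Normalized (X.reverse ++ x :: Y) := by
  have hX : Normalized (X.reverse ++ [x]) := by
    simpa using Normalized.reverse (h.prefix ⟨x :: Y, by simp⟩ : Normalized (x :: X))
  have hY : Normalized ([x] ++ Y) := h.suffix ⟨x :: X, by simp⟩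
  rw [show X.reverse ++ x :: Y = X.reverse ++ [x] ++ Y by simp]
  exact hX.append_overlap hY (by simp)

lemma Normalized.ne {x y : ℕ} {l : List ℕ} (h : Normalized (x :: y :: l)) : x ≠ y :=
  (isChain_cons_cons.mp h).1

lemma eq_rep_of_normalized {a b : ℕ} (hab : a ≠ b) :
    ∀ {w : List ℕ}, Normalized w → (∀ x ∈ w, x = a ∨ x = b) → w.getLast? ≠ some a →
      ∃ k, w = rep [a, b] k ∨ w = b :: rep [a, b] k
  | [], _, _, _ => ⟨0, Or.inl rfl⟩
  | x :: w, hn, hw, hlast => by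
    have hlast' : w.getLast? ≠ some a := by
      cases w with
      | nil => simp
      | cons y w => simpa using hlast
    obtain ⟨k, hk | hk⟩ := eq_rep_of_normalized (w := w) hab (IsChain.tail hn)
      (fun y hy => hw y (mem_cons_of_mem x hy)) hlast'
    · rcases hw x mem_cons_self with rfl | rfl
      · cases k with
        | zero => simp [hk, rep] at hlast
        | succ k => exact absurd rfl (hk ▸ hn : Normalized (x :: x :: _)).ne
      · exact ⟨k, Or.inr (hk ▸ rfl)⟩
    · rcases hw x mem_cons_self with rfl | rfl
      · exact ⟨k + 1, Or.inl (by rw [hk, rep_succ]; rfl)⟩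
      · exact absurd rfl (hk ▸ hn : Normalized (x :: x :: _)).ne

lemma FlipSortable.cons_append_cons {b x : ℕ} {X Y : List ℕ}
    (h : FlipSortable b (X.reverse ++ x :: Y)) : FlipSortable (b + 1) (x :: (X ++ x :: Y)) := by
  have hstep := flipStep_append (x :: Y) (X := x :: X) (by simp)
  simp only [cons_append, reverse_cons, append_assoc] at hstep
  exact (h.of_doubling ⟨X.reverse, x, Y, rfl, rfl⟩).of_flipStep hstep

lemma FlipSortable.cons_max {b c : ℕ} {w : List ℕ} (h : FlipSortable b w.reverse)
    (hc : ∀ a ∈ w, a ≤ c) : FlipSortable (b + 1) (c :: w) := by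
  have hstep := flipStep_append [] (X := c :: w) (by simp)
  simp only [append_nil, reverse_cons] at hstep
  exact (h.append_max (by simpa using hc)).of_flipStep hstep

lemma flipSortable_one_cons {w : List ℕ} (hn : Normalized w) (hw : ∀ a ∈ w, a = 2 ∨ a = 0)
    (hlast : w.getLast? ≠ some 2) : FlipSortable w.length (1 :: w) := by
  obtain ⟨k, rfl | rfl⟩ := eq_rep_of_normalized (by decide) hn hw hlast
  · exact (flipSortable_zeros_one_rep 0 k).mono (by simp [length_rep, mul_comm])
  · exact ((flipSortable_zeros_one_rep 1 k).of_flipStep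
      (flipStep_append _ (X := [1, 0]) (by simp))).mono (by simp [length_rep, mul_comm])

lemma flipSortable_zero_cons {w : List ℕ} (hn : Normalized w) (hw : ∀ a ∈ w, a = 2 ∨ a = 1)
    (hlast : w.getLast? ≠ some 2) (hlen : 4 ≤ w.length) : FlipSortable w.length (0 :: w) := by
  obtain ⟨k, rfl | rfl⟩ := eq_rep_of_normalized (by decide) hn hw hlast
  · obtain ⟨j, rfl⟩ : ∃ j, k = j + 2 := ⟨k - 2, by simp [length_rep] at hlen; omega⟩
    exact (flipSortable_ones_zero_rep 0 j).mono (by simp [length_rep]; omega)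
  · obtain ⟨j, rfl⟩ : ∃ j, k = j + 2 := ⟨k - 2, by simp [length_rep] at hlen; omega⟩
    exact ((flipSortable_ones_zero_rep 1 j).of_flipStep
      (flipStep_append _ (X := [0, 1]) (by simp))).mono (by simp [length_rep]; omega)

theorem flipSortable_length_sub_one {t : List ℕ} (hn : Normalized t) (h3 : ∀ a ∈ t, a < 3)
    (hne : t ≠ [0, 2, 1]) : FlipSortable (t.length - 1) t := by
  induction hm : t.length using Nat.strong_induction_on generalizing t with
  | _ m ih =>
  rcases le_or_gt m 4 with hsmall | hbig
  · exact hm ▸ flipSortable_of_length_le_four (hm ▸ hsmall) h3 hne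
  have ih' : ∀ t', Normalized t' → (∀ a ∈ t', a < 3) → t'.length = m - 1 →
      FlipSortable (m - 2) t' := fun t' hn' h3' hm' =>
    ih (m - 1) (by omega) hn' h3' (by rintro rfl; simp at hm'; omega) hm'
  by_cases hlast : t.getLast? = some 2
  · obtain ⟨t', rfl⟩ := getLast?_eq_some_iff.mp hlast
    have h := ih' t' (hn.prefix (prefix_append _ _)) (fun a ha => h3 a (by simp [ha]))
      (by simp at hm; omega)
    exact (h.append_max fun a ha => by have := h3 a (by simp [ha]); omega).mono (by omega)
  obtain _ | ⟨x, w⟩ := t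
  · simp at hm; omega
  have hw : Normalized w := IsChain.tail hn
  have hlast' : w.getLast? ≠ some 2 := by
    cases w with
    | nil => simp
    | cons y w => simpa using hlast
  have hwm : w.length = m - 1 := by simp at hm; omega
  by_cases hx : x ∈ w
  · obtain ⟨X, Y, rfl⟩ := append_of_mem hx
    have h := ih' (X.reverse ++ x :: Y) hn.reverse_append_cons
      (fun a ha => h3 a (by simp at ha ⊢; tauto)) (by simp at hwm ⊢; omega)
    exact h.cons_append_cons.mono (by omega)
  have hw3 : ∀ a ∈ w, a ≠ x ∧ a < 3 := fun a ha =>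
    ⟨fun h => hx (h ▸ ha), h3 a (mem_cons_of_mem x ha)⟩
  obtain rfl | rfl | rfl : x = 0 ∨ x = 1 ∨ x = 2 := by have := h3 x mem_cons_self; omega
  · exact hwm ▸ flipSortable_zero_cons hw (fun a ha => by have := hw3 a ha; omega) hlast' (by omega)
  · exact hwm ▸ flipSortable_one_cons hw (fun a ha => by have := hw3 a ha; omega) hlast'
  · have h := ih' w.reverse hw.reverse (fun a ha => (hw3 a (mem_reverse.mp ha)).2) (by simp [hwm])
    exact (h.cons_max fun a ha => by have := hw3 a ha; omega).mono (by omega)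

theorem sorting_ternary_upper_bound (n : ℕ) (s : List ℕ)
    (hlen : s.length = n) (hfull : FullyKary 3 s) (hnorm : Normalized s)
    (hlast : s.getLast? = some 2) (hne : s ≠ [0,2,1,2]) :
    sortDist s ≤ n - 2 := by
  obtain ⟨t, rfl⟩ := getLast?_eq_some_iff.mp hlast
  have h3 : ∀ a ∈ t, a < 3 := fun a ha => (hfull a).mp (by simp [ha])
  have ht := flipSortable_length_sub_one (hnorm.prefix (prefix_append _ _)) h3
    (by rintro rfl; exact hne rfl)
  refine sortDist_le ((ht.append_max fun a ha => by have := h3 a ha; omega).mono ?_)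
  simp at hlen; omega
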